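/- arXiv:2409.11189 — 5 statements merged into one kernel-verified Lean document; each statement's English description precedes it below -/
import Mathlib

section
/- Let D be a Prüfer domain and I a nonzero finitely generated fractional ideal of D. Then I = p(I)·n(I)⁻¹, where p(I) = I ∩ D and n(I) = I⁻¹ ∩ D. -/
/-!
Over a Prüfer domain every nonzero finitely generated ideal `J` is invertible: were `J J⁻¹`
contained in a maximal ideal `P`, then, `D_P` being a valuation ring, one generator `a` of `J`
would generate `J D_P`, giving `u ∉ P` with `u J ⊆ a D`; but then `u = a · (u / a) ∈ J J⁻¹ ⊆ P`.
Apply this to `I + D`, whose inverse is `I⁻¹ ∩ D`. The inclusion `(I ∩ D)(I + D) ⊆ I` always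
holds, and conversely `I = I (I + D)⁻¹ (I + D) ⊆ (I ∩ D)(I + D)` since `I (I + D)⁻¹` lies in both
`I` and `D`.
-/

/-- `z ∈ K` is almost integral over `D` if there is a nonzero `c ∈ D` with
`c·zⁿ ∈ D` for every positive integer `n`. -/
def AlmostIntegral (D : Type*) {K : Type*} [CommRing D] [CommRing K] [Algebra D K]
    (z : K) : Prop :=
  ∃ c : D, c ≠ 0 ∧ ∀ n : ℕ, 0 < n → ∃ d : D, algebraMap D K c * z ^ n = algebraMap D K d

open nonZeroDivisors FractionalIdeal

theorem PreValuationRing.exists_mem_forall_dvd {R : Type*} [Monoid R] [PreValuationRing R]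
    {s : Finset R} (hs : s.Nonempty) : ∃ a ∈ s, ∀ b ∈ s, a ∣ b := by
  induction hs using Finset.Nonempty.cons_induction with
  | singleton a => exact ⟨a, by simp⟩
  | cons x s hx hs ih =>
    obtain ⟨a, ha, hdvd⟩ := ih
    rcases ValuationRing.dvd_total x a with h | h
    · exact ⟨x, Finset.mem_cons_self x s,
        (Finset.forall_mem_cons hx _).mpr ⟨dvd_rfl, fun b hb => h.trans (hdvd b hb)⟩⟩
    · exact ⟨a, Finset.mem_cons_of_mem ha, (Finset.forall_mem_cons hx _).mpr ⟨h, hdvd⟩⟩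

theorem IsLocalization.exists_dvd_mul_of_algebraMap_dvd {R S : Type*} [CommSemiring R]
    [CommSemiring S] [Algebra R S] {M : Submonoid R} [IsLocalization M S] {a b : R}
    (h : algebraMap R S a ∣ algebraMap R S b) : ∃ m ∈ M, a ∣ m * b := by
  obtain ⟨c, hc⟩ := h
  obtain ⟨⟨r, t⟩, rfl⟩ := IsLocalization.mk'_surjective M c
  have htb : algebraMap R S (t * b) = algebraMap R S (a * r) := by
    rw [map_mul, map_mul, hc, mul_left_comm, IsLocalization.mk'_spec']
  obtain ⟨m, hm⟩ := IsLocalization.exists_of_eq (M := M) htb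
  exact ⟨m * t, mul_mem m.2 t.2, m * r, by rw [mul_assoc, hm, mul_left_comm]⟩

theorem Ideal.exists_mem_forall_dvd_mul_of_fg {R S : Type*} [CommSemiring R] [CommSemiring S]
    [Algebra R S] (M : Submonoid R) [IsLocalization M S] [PreValuationRing S] {J : Ideal R}
    (hJ : J.FG) : ∃ a ∈ J, ∃ u ∈ M, ∀ x ∈ J, a ∣ u * x := by
  classical
  obtain ⟨s, rfl⟩ := hJ
  rcases s.eq_empty_or_nonempty with rfl | hs
  · exact ⟨0, zero_mem _, 1, one_mem _, by simp⟩
  obtain ⟨_, ha, hdvd⟩ := PreValuationRing.exists_mem_forall_dvd (hs.image (algebraMap R S))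
  obtain ⟨a, has, rfl⟩ := Finset.mem_image.mp ha
  have : ∀ b ∈ s, ∃ m ∈ M, a ∣ m * b := fun b hb =>
    IsLocalization.exists_dvd_mul_of_algebraMap_dvd (hdvd _ (Finset.mem_image_of_mem _ hb))
  choose! t htM hat using this
  refine ⟨a, Ideal.subset_span has, ∏ b ∈ s, t b, Submonoid.prod_mem M htM, fun x hx => ?_⟩
  induction hx using Submodule.span_induction with
  | mem b hb => exact (hat b hb).trans (mul_dvd_mul_right (Finset.dvd_prod_of_mem t hb) b)
  | zero => simp
  | add x y _ _ hx hy => rw [mul_add]; exact dvd_add hx hy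
  | smul c x _ hx => rw [smul_eq_mul, mul_left_comm]; exact hx.mul_left c

namespace FractionalIdeal

theorem inf_one_mul_sup_one_le {R P : Type*} [CommRing R] {S : Submonoid R} [CommRing P]
    [Algebra R P] (I : FractionalIdeal S P) : (I ⊓ 1) * (I ⊔ 1) ≤ I := by
  rw [sup_eq_add, mul_add, mul_one, ← sup_eq_add]
  refine sup_le ?_ inf_le_left
  calc (I ⊓ 1) * I ≤ 1 * I := by gcongr; exact inf_le_right
    _ = I := one_mul I

theorem sup_one_ne_zero {D K : Type*} [CommRing D] [Field K] [Algebra D K]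
    (I : FractionalIdeal D⁰ K) : I ⊔ 1 ≠ 0 :=
  ne_bot_of_le_ne_bot one_ne_zero le_sup_right

variable {D K : Type*} [CommRing D] [IsDomain D] [Field K] [Algebra D K] [IsFractionRing D K]

theorem algebraMap_div_mem_inv_coeIdeal {J : Ideal D} (hJ : J ≠ ⊥) {a u : D} (ha : a ≠ 0)
    (h : ∀ x ∈ J, a ∣ u * x) :
    algebraMap D K u / algebraMap D K a ∈ (J : FractionalIdeal D⁰ K)⁻¹ := by
  rw [mem_inv_iff (coeIdeal_ne_zero.mpr hJ)]
  rintro _ ⟨x, hx, rfl⟩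
  obtain ⟨d, hd⟩ := h x hx
  have ha' : algebraMap D K a ≠ 0 := (map_ne_zero_iff _ (IsFractionRing.injective D K)).mpr ha
  refine (mem_one_iff _).mpr ⟨d, ?_⟩
  rw [Algebra.linearMap_apply, div_mul_eq_mul_div, eq_div_iff ha', ← map_mul, ← map_mul, hd,
    mul_comm]

theorem inv_sup_one {I : FractionalIdeal D⁰ K} (hI : I ≠ 0) : (I ⊔ 1)⁻¹ = I⁻¹ ⊓ 1 := by
  have hS := sup_one_ne_zero I
  refine eq_of_forall_le_iff fun X => ?_
  rw [inv_eq, inv_eq, le_div_iff_mul_le hS, le_inf_iff, le_div_iff_mul_le hI, sup_eq_add,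
    mul_add, mul_one, ← sup_eq_add, sup_le_iff]

theorem mul_inv_sup_one_le (I : FractionalIdeal D⁰ K) : I * (I ⊔ 1)⁻¹ ≤ I ⊓ 1 := by
  have hS := sup_one_ne_zero I
  refine le_inf ?_ ?_
  · calc I * (I ⊔ 1)⁻¹ ≤ I * 1⁻¹ := by gcongr; exact inv_anti_mono one_ne_zero hS le_sup_right
      _ = I := by rw [inv_one, mul_one]
  · calc I * (I ⊔ 1)⁻¹ ≤ (I ⊔ 1) * (I ⊔ 1)⁻¹ := by gcongr; exact le_sup_left
      _ ≤ 1 := mul_one_div_le_one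

theorem inf_one_mul_sup_one {I : FractionalIdeal D⁰ K} (h : IsUnit (I ⊔ 1)) :
    (I ⊓ 1) * (I ⊔ 1) = I := by
  refine le_antisymm (inf_one_mul_sup_one_le I) ?_
  calc I = I * (I ⊔ 1)⁻¹ * (I ⊔ 1) := by
        rw [mul_assoc, mul_comm _ (I ⊔ 1), (mul_inv_cancel_iff_isUnit K).mpr h, mul_one]
    _ ≤ (I ⊓ 1) * (I ⊔ 1) := by gcongr; exact mul_inv_sup_one_le I

theorem isUnit_coeIdeal_of_fg
    (hloc : ∀ (P : Ideal D) [P.IsMaximal], ValuationRing (Localization.AtPrime P))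
    {J : Ideal D} (hJ : J ≠ ⊥) (hfg : J.FG) : IsUnit (J : FractionalIdeal D⁰ K) := by
  rw [← mul_inv_cancel_iff_isUnit K]
  obtain ⟨T, hT⟩ := le_one_iff_exists_coeIdeal.mp
    (mul_one_div_le_one (I := (J : FractionalIdeal D⁰ K)))
  rw [inv_eq, ← hT, coeIdeal_eq_one, Ideal.one_eq_top]
  by_contra hT1
  obtain ⟨P, hP, hTP⟩ := Ideal.exists_le_maximal T hT1
  have := hloc P
  obtain ⟨a, haJ, u, huP, hdvd⟩ :=
    Ideal.exists_mem_forall_dvd_mul_of_fg P.primeCompl (S := Localization.AtPrime P) hfg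
  have hu0 : u ≠ 0 := fun hu => huP (hu ▸ P.zero_mem)
  have ha0 : a ≠ 0 := by
    rintro rfl
    refine hJ ((Submodule.eq_bot_iff J).mpr fun x hx => ?_)
    simpa [hu0] using hdvd x hx
  have hga : algebraMap D K a ≠ 0 := (map_ne_zero_iff _ (IsFractionRing.injective D K)).mpr ha0
  have huT : algebraMap D K u ∈ (T : FractionalIdeal D⁰ K) := by
    rw [hT, ← mul_div_cancel₀ (algebraMap D K u) hga]
    exact mul_mem_mul (mem_coeIdeal_of_mem D⁰ haJ)
      (algebraMap_div_mem_inv_coeIdeal hJ ha0 hdvd)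
  obtain ⟨v, hvT, hvu⟩ := (mem_coeIdeal _).mp huT
  exact huP (hTP (IsFractionRing.injective D K hvu ▸ hvT))

theorem isUnit_of_fg
    (hloc : ∀ (P : Ideal D) [P.IsMaximal], ValuationRing (Localization.AtPrime P))
    {I : FractionalIdeal D⁰ K} (hI : I ≠ 0) (hfg : (I : Submodule D K).FG) : IsUnit I := by
  have hnum : IsUnit (I.num : FractionalIdeal D⁰ K) := by
    refine isUnit_coeIdeal_of_fg hloc (num_eq_zero_iff.not.mpr hI) ?_
    rw [← coeIdeal_fg D⁰ (IsFractionRing.injective D K), ← den_mul_self_eq_num', coe_mul,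
      coe_spanSingleton]
    exact (Submodule.fg_span_singleton _).mul hfg
  rw [← den_mul_self_eq_num'] at hnum
  exact isUnit_of_mul_isUnit_right hnum

end FractionalIdeal

open nonZeroDivisors in
/-- In a Prüfer domain, `I = p(I)·n(I)⁻¹` for every nonzero finitely generated
fractional ideal `I`. -/
theorem stmt8 (D K : Type*) [CommRing D] [IsDomain D] [Field K] [Algebra D K]
    [IsFractionRing D K]
    (hPruf : ∀ (P : Ideal D) [P.IsPrime], ValuationRing (Localization.AtPrime P))
    (I : FractionalIdeal D⁰ K) (hI : I ≠ 0) (hfg : (I : Submodule D K).FG) :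
    I = (I ⊓ 1) * (I⁻¹ ⊓ 1)⁻¹ := by
  have hS : IsUnit (I ⊔ 1) := by
    refine isUnit_of_fg (fun P _ => hPruf P) (sup_one_ne_zero I) ?_
    rw [coe_sup, coe_one, Submodule.one_eq_span]
    exact hfg.sup (Submodule.fg_span_singleton 1)
  have hSS : (I ⊔ 1)⁻¹ * (I ⊔ 1) = 1 := by rw [mul_comm, (mul_inv_cancel_iff_isUnit K).mpr hS]
  rw [← inv_sup_one hI, ← right_inverse_eq K _ _ hSS, inf_one_mul_sup_one hS]
end

section
/- Let D be a Prüfer domain and I a nonzero finitely generated fractional ideal of D. Then p(I) + n(I) = D, i.e., the positive part I ∩ D and the negative part I⁻¹ ∩ D are comaximal ideals. -/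
lemma valuationRing_of_ringEquiv {A B : Type*} [CommRing A] [IsDomain A] [CommRing B]
    [IsDomain B] [ValuationRing A] (e : A ≃+* B) : ValuationRing B := by
  suffices h : PreValuationRing B from ValuationRing.mk
  constructor
  intro a b
  obtain ⟨c, hc | hc⟩ := ValuationRing.cond (e.symm a) (e.symm b)
  · exact ⟨e c, Or.inl (by simpa using congrArg e hc)⟩
  · exact ⟨e c, Or.inr (by simpa using congrArg e hc)⟩

open nonZeroDivisors in
/-- In a Prüfer domain, `p(I) + n(I) = D` for every nonzero finitely generated
fractional ideal `I`. -/
theorem stmt9 (D K : Type*) [CommRing D] [IsDomain D] [Field K] [Algebra D K]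
    [IsFractionRing D K]
    (hPruf : ∀ (P : Ideal D) [P.IsPrime], ValuationRing (Localization.AtPrime P))
    (I : FractionalIdeal D⁰ K) (hI : I ≠ 0) (hfg : (I : Submodule D K).FG) :
    (I ⊓ 1) ⊔ (I⁻¹ ⊓ 1) = 1 := by
  classical
  -- the sup is an integral ideal
  have hle : (I ⊓ 1) ⊔ (I⁻¹ ⊓ 1) ≤ 1 := sup_le inf_le_right inf_le_right
  obtain ⟨J, hJ⟩ := FractionalIdeal.le_one_iff_exists_coeIdeal.mp hle
  rw [← hJ, ← FractionalIdeal.coeIdeal_top, FractionalIdeal.coeIdeal_inj]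
  by_contra hJtop
  obtain ⟨M, hMmax, hJM⟩ := Ideal.exists_le_maximal J hJtop
  haveI : M.IsPrime := hMmax.isPrime
  -- the localization at M, realized as a subalgebra of K
  have hS : M.primeCompl ≤ D⁰ := fun x hx =>
    mem_nonZeroDivisors_of_ne_zero (fun h0 => hx (h0 ▸ M.zero_mem))
  set R' : Subalgebra D K := Localization.subalgebra.ofField K M.primeCompl hS with hR'
  haveI : ValuationRing R' := by
    have := hPruf M
    exact valuationRing_of_ringEquiv
      (IsLocalization.algEquiv M.primeCompl (Localization.AtPrime M) R').toRingEquiv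
  -- a convenient membership criterion for elements of `J`
  have hmemJ : ∀ d : D, algebraMap D K d ∈ (I ⊓ 1) ⊔ (I⁻¹ ⊓ 1) → d ∈ M := by
    intro d hd
    rw [← hJ, FractionalIdeal.mem_coeIdeal] at hd
    obtain ⟨d', hd', hdd⟩ := hd
    have : d' = d := IsFractionRing.injective D K hdd
    exact hJM (this ▸ hd')
  -- dichotomy from the valuation ring
  have dich : ∀ x : K, x ∈ R' ∨ x⁻¹ ∈ R' := by
    intro x
    rcases ValuationRing.isInteger_or_isInteger R' x with ⟨r, hr⟩ | ⟨r, hr⟩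
    · exact Or.inl (hr ▸ r.2)
    · exact Or.inr (hr ▸ r.2)
  -- membership in R'
  have memR' : ∀ x : K, x ∈ R' →
      ∃ a : D, ∃ s ∈ M.primeCompl, x = algebraMap D K a * (algebraMap D K s)⁻¹ := by
    intro x hx
    have h2 : x ∈ { x : K | ∃ (a s : D) (_ : s ∈ M.primeCompl),
        x = algebraMap D K a * (algebraMap D K s)⁻¹ } := by
      have hcoe : (R' : Set K) = { x : K | ∃ (a s : D) (_ : s ∈ M.primeCompl),
          x = algebraMap D K a * (algebraMap D K s)⁻¹ } := by
        rw [hR']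
        exact Subalgebra.coe_copy _ _ _
      rw [← hcoe]
      exact hx
    obtain ⟨a, s, hs, hform⟩ := h2
    exact ⟨a, s, hs, hform⟩
  have smap_ne : ∀ s : D, s ∈ M.primeCompl → algebraMap D K s ≠ 0 := by
    intro s hs h0
    have : s = 0 := IsFractionRing.injective D K (by simpa using h0)
    exact hs (this ▸ M.zero_mem)
  -- nonzero finite generating set
  obtain ⟨s0, hspan⟩ := hfg
  set T : Finset K := s0.erase 0 with hT
  have hTspan : Submodule.span D (T : Set K) = (I : Submodule D K) := by
    rw [← hspan]
    apply le_antisymm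
    · exact Submodule.span_mono (by simp [hT, Finset.coe_erase, Set.diff_subset])
    · have h1 : (s0 : Set K) ⊆ insert (0 : K) (T : Set K) := by
        intro y hy
        by_cases hy0 : y = 0
        · simp [hy0]
        · exact Set.mem_insert_of_mem _ (by simp [hT, hy, hy0])
      calc Submodule.span D (s0 : Set K) ≤ Submodule.span D (insert 0 (T : Set K)) :=
            Submodule.span_mono h1
        _ = Submodule.span D (T : Set K) := Submodule.span_insert_zero
  have hTne : T.Nonempty := by
    rcases Finset.eq_empty_or_nonempty T with h | h
    · exfalso
      apply hI
      have : (I : Submodule D K) = ⊥ := by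
        rw [← hTspan, h]; simp
      rw [← FractionalIdeal.coeToSubmodule_injective.eq_iff, this]
      simp
    · exact h
  have hTnz : ∀ y ∈ T, y ≠ 0 := fun y hy => Finset.ne_of_mem_erase hy
  -- comparability of nonzero elements over R'
  have comp : ∀ x y : K, x ≠ 0 → y ≠ 0 →
      (∃ r : K, r ∈ R' ∧ r * x = y) ∨ (∃ r : K, r ∈ R' ∧ r * y = x) := by
    intro x y hx hy
    rcases dich (y / x) with h | h
    · exact Or.inl ⟨y / x, h, by field_simp⟩
    · rw [inv_div] at h
      exact Or.inr ⟨x / y, h, by field_simp⟩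
  -- there is a generator of minimal value
  have hmin : ∀ (T' : Finset K), T'.Nonempty → (∀ y ∈ T', y ≠ 0) →
      ∃ x ∈ T', ∀ y ∈ T', ∃ r : K, r ∈ R' ∧ r * x = y := by
    intro T' hT'ne
    induction hT'ne using Finset.Nonempty.cons_induction with
    | singleton a =>
      intro _
      exact ⟨a, Finset.mem_singleton_self a, fun y hy => ⟨1, R'.one_mem, by
        rw [Finset.mem_singleton] at hy; simp [hy]⟩⟩
    | cons a s ha hs ih =>
      intro hnz
      obtain ⟨x, hxs, hx⟩ := ih (fun y hy => hnz y (Finset.mem_cons_of_mem hy))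
      have hane : a ≠ 0 := hnz a (Finset.mem_cons_self a s)
      have hxne : x ≠ 0 := hnz x (Finset.mem_cons_of_mem hxs)
      rcases comp x a hxne hane with ⟨r, hr, hrx⟩ | ⟨r0, hr0, hr0a⟩
      · refine ⟨x, Finset.mem_cons_of_mem hxs, fun y hy => ?_⟩
        rcases Finset.mem_cons.mp hy with rfl | hy'
        · exact ⟨r, hr, hrx⟩
        · exact hx y hy'
      · refine ⟨a, Finset.mem_cons_self a s, fun y hy => ?_⟩
        rcases Finset.mem_cons.mp hy with rfl | hy'
        · exact ⟨1, R'.one_mem, one_mul y⟩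
        · obtain ⟨r, hr, hrx⟩ := hx y hy'
          exact ⟨r * r0, R'.mul_mem hr hr0, by rw [mul_assoc, hr0a, hrx]⟩
  obtain ⟨x, hxT, hx⟩ := hmin T hTne hTnz
  have hxne : x ≠ 0 := hTnz x hxT
  have hxI : x ∈ I := by
    rw [← FractionalIdeal.mem_coe, ← hTspan]
    exact Submodule.subset_span hxT
  rcases dich x with hxR | hxR
  · -- x ∈ R' : every generator is in R', so a common denominator s ∉ M lies in I⁻¹ ∩ D
    have hyR : ∀ y ∈ T, ∃ a s : D, s ∈ M.primeCompl ∧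
        algebraMap D K s * y = algebraMap D K a := by
      intro y hy
      obtain ⟨r, hr, hrx⟩ := hx y hy
      have hyR' : y ∈ R' := hrx ▸ R'.mul_mem hr hxR
      obtain ⟨a, s, hsM, hform⟩ := memR' y hyR'
      refine ⟨a, s, hsM, ?_⟩
      rw [hform, ← mul_assoc, mul_comm (algebraMap D K s) (algebraMap D K a), mul_assoc,
        mul_inv_cancel₀ (smap_ne s hsM), mul_one]
    -- choose numerators and denominators
    choose num den hden hnumden using hyR
    set s : D := ∏ y ∈ T.attach, den y.1 y.2 with hsdef
    have hsM : s ∈ M.primeCompl := Submonoid.prod_mem _ (fun y _ => hden y.1 y.2)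
    have hkey : ∀ z ∈ I, algebraMap D K s * z ∈ (1 : FractionalIdeal D⁰ K) := by
      intro z hz
      have hz' : z ∈ Submodule.span D (T : Set K) := by
        rw [hTspan]; exact hz
      refine Submodule.span_induction (p := fun z _ =>
        algebraMap D K s * z ∈ (1 : FractionalIdeal D⁰ K)) ?_ ?_ ?_ ?_ hz'
      · intro y hyT
        have hyT' : y ∈ T := hyT
        have : algebraMap D K s * y =
            algebraMap D K ((∏ w ∈ (T.attach.erase ⟨y, hyT'⟩), den w.1 w.2) * num y hyT') := by
          have hsplit : s = den y hyT' * ∏ w ∈ (T.attach.erase ⟨y, hyT'⟩), den w.1 w.2 := by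
            rw [hsdef, ← Finset.mul_prod_erase _ _ (Finset.mem_attach T ⟨y, hyT'⟩)]
          rw [hsplit, map_mul, map_mul, mul_comm (algebraMap D K (den y hyT')), mul_assoc,
            hnumden y hyT', mul_comm]
        rw [this]
        exact FractionalIdeal.coe_mem_one _ _
      · show algebraMap D K s * 0 ∈ (1 : FractionalIdeal D⁰ K)
        rw [mul_zero]
        exact (FractionalIdeal.mem_one_iff _).mpr ⟨0, map_zero _⟩
      · intro z w _ _ hz hw
        rw [← FractionalIdeal.mem_coe] at hz hw ⊢
        rw [mul_add]
        exact Submodule.add_mem _ hz hw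
      · intro d z _ hz
        rw [← FractionalIdeal.mem_coe] at hz ⊢
        rw [mul_smul_comm]
        exact Submodule.smul_mem _ d hz
    have hsinv : algebraMap D K s ∈ I⁻¹ :=
      (FractionalIdeal.mem_inv_iff hI).mpr (fun y hy => hkey y hy)
    have : algebraMap D K s ∈ (I ⊓ 1) ⊔ (I⁻¹ ⊓ 1) :=
      le_sup_right (α := FractionalIdeal D⁰ K)
        (Submodule.mem_inf.mpr ⟨hsinv, FractionalIdeal.coe_mem_one _ _⟩)
    exact hsM (hmemJ s this)
  · -- x⁻¹ ∈ R' : then s = a·x ∈ I ∩ D with s ∉ M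
    obtain ⟨a, s, hsM, hform⟩ := memR' x⁻¹ hxR
    have hS := smap_ne s hsM
    have hsx : algebraMap D K s = algebraMap D K a * x := by
      have h1 : x⁻¹ * x = 1 := inv_mul_cancel₀ hxne
      rw [hform] at h1
      field_simp at h1
      linear_combination -h1
    have hsI : algebraMap D K s ∈ I := by
      rw [← FractionalIdeal.mem_coe, hsx, ← Algebra.smul_def]
      refine Submodule.smul_mem _ a ?_
      rw [← hTspan]
      exact Submodule.subset_span hxT
    have : algebraMap D K s ∈ (I ⊓ 1) ⊔ (I⁻¹ ⊓ 1) :=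
      le_sup_left (α := FractionalIdeal D⁰ K)
        (Submodule.mem_inf.mpr ⟨hsI, FractionalIdeal.coe_mem_one _ _⟩)
    exact hsM (hmemJ s this)
end

section
/- Let D be a Bézout domain with quotient field K, let z ∈ K, and write z = x/y where xD = zD ∩ D (so x generates the positive part) and yD = z⁻¹D ∩ D generates the negative part of the fractional ideal zD (with xD + yD = D). Then z is almost integral over D if and only if y⁻¹ is almost integral over D. -/
/-!
Since `x` and `y` are coprime, `c·(x/y)ⁿ ∈ D` holds exactly when `yⁿ ∣ c`, whatever `x` is.
Taking `x = 1` shows that `y⁻¹` satisfies the same condition, so `z = x/y` and `y⁻¹` are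
almost integral together.
-/

section

variable {D K : Type*} [CommRing D] [Field K] [Algebra D K] [FaithfulSMul D K]

theorem exists_algebraMap_mul_div_pow_eq_iff {x y : D} (hy : y ≠ 0) (hcop : IsCoprime x y)
    (c : D) (n : ℕ) :
    (∃ d : D, algebraMap D K c * (algebraMap D K x / algebraMap D K y) ^ n = algebraMap D K d) ↔
      y ^ n ∣ c := by
  have hyn : algebraMap D K y ^ n ≠ 0 :=
    pow_ne_zero n <| (map_ne_zero_iff _ (FaithfulSMul.algebraMap_injective D K)).mpr hy
  constructor
  · rintro ⟨d, hd⟩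
    have hcross : c * x ^ n = y ^ n * d := by
      apply FaithfulSMul.algebraMap_injective D K
      rw [div_pow, mul_div_assoc', div_eq_iff hyn] at hd
      simpa only [map_mul, map_pow, mul_comm (algebraMap D K d)] using hd
    exact (hcop.symm.pow (m := n) (n := n)).dvd_of_dvd_mul_right ⟨d, hcross⟩
  · rintro ⟨e, rfl⟩
    refine ⟨e * x ^ n, ?_⟩
    simp only [map_mul, map_pow, div_pow]
    field_simp

theorem almostIntegral_div_iff {x y : D} (hy : y ≠ 0) (hcop : IsCoprime x y) :
    AlmostIntegral D (algebraMap D K x / algebraMap D K y) ↔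
      ∃ c : D, c ≠ 0 ∧ ∀ n : ℕ, 0 < n → y ^ n ∣ c := by
  simp only [AlmostIntegral, exists_algebraMap_mul_div_pow_eq_iff hy hcop]

end

open nonZeroDivisors in
theorem stmt10_general (D K : Type*) [CommRing D] [Field K]
    [Algebra D K] [IsFractionRing D K] (z : K) (x y : D) (hy : y ≠ 0)
    (hxy : z * algebraMap D K y = algebraMap D K x)
    (hcop : IsCoprime x y) :
    AlmostIntegral D z ↔ AlmostIntegral D (algebraMap D K y)⁻¹ := by
  have hyK : algebraMap D K y ≠ 0 :=
    (map_ne_zero_iff _ (IsFractionRing.injective D K)).mpr hy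
  have hz : z = algebraMap D K x / algebraMap D K y := eq_div_of_mul_eq hyK hxy
  rw [hz, inv_eq_one_div, ← map_one (algebraMap D K), almostIntegral_div_iff hy hcop,
    almostIntegral_div_iff hy isCoprime_one_left]

open nonZeroDivisors in
/-- In a Bézout domain, writing `z = x/y` with `xD = zD ⊓ D`, `yD = (zD)⁻¹ ⊓ D`
(so `xD + yD = D`), `z` is almost integral over `D` iff `y⁻¹` is. -/
theorem stmt10 (D K : Type*) [CommRing D] [IsDomain D] [IsBezout D] [Field K]
    [Algebra D K] [IsFractionRing D K] (z : K) (x y : D) (hy : y ≠ 0)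
    (hpos : FractionalIdeal.spanSingleton D⁰ z ⊓ 1 =
      FractionalIdeal.spanSingleton D⁰ (algebraMap D K x))
    (hneg : (FractionalIdeal.spanSingleton D⁰ z)⁻¹ ⊓ 1 =
      FractionalIdeal.spanSingleton D⁰ (algebraMap D K y))
    (hxy : z * algebraMap D K y = algebraMap D K x)
    (hcop : IsCoprime x y) :
    AlmostIntegral D z ↔ AlmostIntegral D (algebraMap D K y)⁻¹ :=
  stmt10_general D K z x y hy hxy hcop
end

section
/- Let D be a Bézout domain with quotient field K, let x, y ∈ D be nonzero with xD + yD = D, and suppose there is a nonzero c ∈ D such that c·(x/y)ⁿ ∈ D for all positive integers n. Then c·y⁻ⁿ ∈ D for all positive integers n. -/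
theorem IsCoprime.pow_dvd_of_mul_pow_eq {R : Type*} [CommSemiring R] {x y c d : R}
    (hxy : IsCoprime x y) {n : ℕ} (h : c * x ^ n = d * y ^ n) : y ^ n ∣ c :=
  hxy.pow.symm.dvd_of_dvd_mul_right ⟨d, h.trans (mul_comm _ _)⟩

theorem mul_div_pow_eq_iff {K : Type*} [Field K] {a b c d : K} (hb : b ≠ 0) (n : ℕ) :
    c * (a / b) ^ n = d ↔ c * a ^ n = d * b ^ n := by
  rw [div_pow, mul_div_assoc', div_eq_iff (pow_ne_zero n hb)]

theorem IsFractionRing.pow_dvd_of_mul_div_pow_eq {D K : Type*} [CommRing D] [Field K]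
    [Algebra D K] [IsFractionRing D K] {x y c d : D} (hxy : IsCoprime x y) (hy : y ≠ 0)
    {n : ℕ} (h : algebraMap D K c * (algebraMap D K x / algebraMap D K y) ^ n =
      algebraMap D K d) : y ^ n ∣ c := by
  have hyK : algebraMap D K y ≠ 0 :=
    (map_ne_zero_iff _ (IsFractionRing.injective D K)).mpr hy
  rw [mul_div_pow_eq_iff hyK, ← map_pow, ← map_pow, ← map_mul, ← map_mul] at h
  exact hxy.pow_dvd_of_mul_pow_eq (IsFractionRing.injective D K h)

theorem stmt11_general (D K : Type*) [CommRing D] [Field K]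
    [Algebra D K] [IsFractionRing D K] (x y c : D) (hy : y ≠ 0)
    (hcop : IsCoprime x y)
    (h : ∀ n : ℕ, 0 < n →
      ∃ d : D, algebraMap D K c * (algebraMap D K x / algebraMap D K y) ^ n = algebraMap D K d) :
    ∀ n : ℕ, 0 < n →
      ∃ d : D, algebraMap D K c * ((algebraMap D K y)⁻¹) ^ n = algebraMap D K d := by
  intro n hn
  obtain ⟨d, hd⟩ := h n hn
  obtain ⟨e, rfl⟩ := IsFractionRing.pow_dvd_of_mul_div_pow_eq hcop hy hd
  have hyn : algebraMap D K y ^ n ≠ 0 :=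
    pow_ne_zero n ((map_ne_zero_iff _ (IsFractionRing.injective D K)).mpr hy)
  refine ⟨e, ?_⟩
  rw [map_mul, map_pow, inv_pow, mul_right_comm, mul_inv_cancel₀ hyn, one_mul]

/-- In a Bézout domain, if `x` and `y` are coprime and `c·(x/y)ⁿ ∈ D` for all
`n ≥ 1`, then `c·y⁻ⁿ ∈ D` for all `n ≥ 1`. -/
theorem stmt11 (D K : Type*) [CommRing D] [IsDomain D] [IsBezout D] [Field K]
    [Algebra D K] [IsFractionRing D K] (x y c : D) (hx : x ≠ 0) (hy : y ≠ 0)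
    (hcop : IsCoprime x y) (hc : c ≠ 0)
    (h : ∀ n : ℕ, 0 < n →
      ∃ d : D, algebraMap D K c * (algebraMap D K x / algebraMap D K y) ^ n = algebraMap D K d) :
    ∀ n : ℕ, 0 < n →
      ∃ d : D, algebraMap D K c * ((algebraMap D K y)⁻¹) ^ n = algebraMap D K d :=
  stmt11_general D K x y c hy hcop h
end

section
/- Let D be a Prüfer domain, I a nonzero finitely generated proper ideal of D, and Q a minimal prime of I. Then there exists a prime ideal Q₀ ⊊ Q such that there is no prime ideal strictly between Q₀ and Q. -/
/-!
Since `D_Q` is a valuation ring, the primes of `D` below `Q` form a chain, so the union `Q₀` of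
the primes strictly below `Q` is prime and no prime lies strictly between `Q₀` and `Q`. By
minimality, `I` lies in no prime strictly below `Q`; as `I` is finitely generated, it cannot lie in
the directed union `Q₀` either, so `Q₀ ≠ Q`.
-/

namespace Ideal

variable {R : Type*} [CommRing R]

theorem isPrime_sSup_of_directedOn {S : Set (Ideal R)} (hne : S.Nonempty)
    (hdir : DirectedOn (· ≤ ·) S) (hprime : ∀ P ∈ S, P.IsPrime) : (sSup S).IsPrime := by
  have hmem : ∀ x, x ∈ sSup S ↔ ∃ P ∈ S, x ∈ P := fun _ =>
    Submodule.mem_sSup_of_directed hne hdir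
  refine ⟨fun htop => ?_, fun {x y} hxy => ?_⟩
  · obtain ⟨P, hP, hone⟩ := (hmem 1).1 (htop ▸ Submodule.mem_top)
    exact (hprime P hP).ne_top ((eq_top_iff_one P).2 hone)
  · obtain ⟨P, hP, hxyP⟩ := (hmem (x * y)).1 hxy
    exact ((hprime P hP).mem_or_mem hxyP).imp (le_sSup hP ·) (le_sSup hP ·)

theorem isChain_isPrime_le_of_valuationRing [IsDomain R] (Q : Ideal R) [Q.IsPrime]
    [ValuationRing (Localization.AtPrime Q)] :
    IsChain (· ≤ ·) {P : Ideal R | P.IsPrime ∧ P ≤ Q} := by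
  intro P₁ h₁ P₂ h₂ _
  let e := IsLocalization.AtPrime.orderIsoOfPrime (Localization.AtPrime Q) Q
  rcases total_of (· ≤ ·) (e.symm ⟨P₁, h₁⟩).1 (e.symm ⟨P₂, h₂⟩).1 with h | h
  · exact Or.inl (e.symm.le_iff_le.1 h)
  · exact Or.inr (e.symm.le_iff_le.1 h)

theorem exists_isPrime_covBy_of_mem_minimalPrimes {I Q : Ideal R} (hI : I.FG)
    (hQ : Q ∈ I.minimalPrimes) (hchain : IsChain (· ≤ ·) {P : Ideal R | P.IsPrime ∧ P < Q})
    (hne : {P : Ideal R | P.IsPrime ∧ P < Q}.Nonempty) :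
    ∃ Q₀ : Ideal R, Q₀.IsPrime ∧ Q₀ < Q ∧
      ¬∃ L : Ideal R, L.IsPrime ∧ Q₀ < L ∧ L < Q := by
  set S := {P : Ideal R | P.IsPrime ∧ P < Q}
  have hI_not_le : ∀ P ∈ S, ¬I ≤ P := fun P hP hIP =>
    hP.2.not_ge (hQ.2 ⟨hP.1, hIP⟩ hP.2.le)
  have hI_not_le_sSup : ¬I ≤ sSup S := fun hIS => by
    obtain ⟨P, hP, hIP⟩ :=
      (CompleteLattice.isCompactElement_iff_le_of_directed_sSup_le (α := Ideal R) I).1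
        ((Submodule.fg_iff_compact I).1 hI) S hne hchain.directedOn hIS
    exact hI_not_le P hP hIP
  refine ⟨sSup S, isPrime_sSup_of_directedOn hne hchain.directedOn fun P hP => hP.1,
    lt_of_le_of_ne (sSup_le fun P hP => hP.2.le) fun h => hI_not_le_sSup (h ▸ hQ.1.2), ?_⟩
  rintro ⟨L, hL, hQ₀L, hLQ⟩
  exact hQ₀L.not_ge (le_sSup ⟨hL, hLQ⟩)

end Ideal

theorem stmt17_general (D : Type*) [CommRing D] [IsDomain D]
    (hPruf : ∀ (P : Ideal D) [P.IsPrime], ValuationRing (Localization.AtPrime P))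
    (I : Ideal D) (hI0 : I ≠ ⊥) (hIfg : I.FG)
    (Q : Ideal D) (hQ : Q ∈ I.minimalPrimes) :
    ∃ Q₀ : Ideal D, Q₀.IsPrime ∧ Q₀ < Q ∧
      ¬∃ L : Ideal D, L.IsPrime ∧ Q₀ < L ∧ L < Q := by
  have := hQ.1.1
  have := hPruf Q
  have hQ_ne_bot : Q ≠ ⊥ := fun h => hI0 (le_bot_iff.1 (h ▸ hQ.1.2))
  exact Ideal.exists_isPrime_covBy_of_mem_minimalPrimes hIfg hQ
    ((Ideal.isChain_isPrime_le_of_valuationRing Q).mono fun _ hP => And.imp_right le_of_lt hP)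
    ⟨⊥, Ideal.isPrime_bot, bot_lt_iff_ne_bot.2 hQ_ne_bot⟩

/-- In a Prüfer domain, every prime minimal over a nonzero finitely generated
proper ideal has an immediate predecessor in `Spec(D)`. -/
theorem stmt17 (D : Type*) [CommRing D] [IsDomain D]
    (hPruf : ∀ (P : Ideal D) [P.IsPrime], ValuationRing (Localization.AtPrime P))
    (I : Ideal D) (hI0 : I ≠ ⊥) (hIfg : I.FG) (hItop : I ≠ ⊤)
    (Q : Ideal D) (hQ : Q ∈ I.minimalPrimes) :
    ∃ Q₀ : Ideal D, Q₀.IsPrime ∧ Q₀ < Q ∧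
      ¬∃ L : Ideal D, L.IsPrime ∧ Q₀ < L ∧ L < Q :=
  stmt17_general D hPruf I hI0 hIfg Q hQ
end
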